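/- arXiv:2306.02280 — 8 statements merged into one kernel-verified Lean document; each statement's English description precedes it below -/
import Mathlib

section
/- Let n ≥ 1 and let θ be an n×n non-negative real matrix. Then the M-th power of perm(θ) satisfies (perm θ)^M = Σ_{γ ∈ Γ_{M,n}} θ^{M·γ} · C_M(γ), where Γ_{M,n} is the set of doubly stochastic n×n matrices with entries that are integer multiples of 1/M, θ^{M·γ} = Π_{i,j} θ(i,j)^{M·γ(i,j)}, and C_M(γ) is the number of M-tuples (σ_1,…,σ_M) of permutations of [n] whose associated permutation matrices average to γ, i.e. (1/M)·Σ_m P_{σ_m} = γ. -/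
open scoped BigOperators

/-- The permanent of an `n × n` real matrix. -/
noncomputable def perm {n : ℕ} (γ : Matrix (Fin n) (Fin n) ℝ) : ℝ :=
  ∑ σ : Equiv.Perm (Fin n), ∏ i, γ i (σ i)

/-- Doubly stochastic: non-negative entries, row sums and column sums equal 1. -/
def IsDoublyStochastic {n : ℕ} (γ : Matrix (Fin n) (Fin n) ℝ) : Prop :=
  (∀ i j, 0 ≤ γ i j) ∧ (∀ i, ∑ j, γ i j = 1) ∧ (∀ j, ∑ i, γ i j = 1)

/-- The permutation matrix associated with `σ`. -/
def Pmat {n : ℕ} (σ : Equiv.Perm (Fin n)) : Matrix (Fin n) (Fin n) ℝ :=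
  fun i j => if σ i = j then 1 else 0

/-- `γ ∈ Γ_{M,n}`: doubly stochastic with all entries integer multiples of `1/M`. -/
def MemGamma {n : ℕ} (M : ℕ) (γ : Matrix (Fin n) (Fin n) ℝ) : Prop :=
  IsDoublyStochastic γ ∧ ∀ i j, ∃ k : ℕ, γ i j = (k : ℝ) / M

/-- `C_M(γ)`: the number of `M`-tuples of permutations whose permutation matrices
average to `γ`. -/
noncomputable def CM {n : ℕ} (M : ℕ) (γ : Matrix (Fin n) (Fin n) ℝ) : ℕ :=
  Nat.card {σs : Fin M → Equiv.Perm (Fin n) // γ = (M : ℝ)⁻¹ • ∑ m, Pmat (σs m)}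

/-- `θ^{M·γ} = ∏_{i,j} θ(i,j)^{M·γ(i,j)}` (the exponents are natural numbers for
`γ ∈ Γ_{M,n}`). -/
noncomputable def matPow {n : ℕ} (M : ℕ) (θ γ : Matrix (Fin n) (Fin n) ℝ) : ℝ :=
  ∏ i, ∏ j, θ i j ^ (⌊(M : ℝ) * γ i j⌋₊)

theorem perm_pow_eq_sum_CM {n M : ℕ} (hn : 1 ≤ n) (hM : 1 ≤ M)
    (θ : Matrix (Fin n) (Fin n) ℝ) (hθ : ∀ i j, 0 ≤ θ i j) :
    (perm θ) ^ M
      = ∑ᶠ γ ∈ {γ : Matrix (Fin n) (Fin n) ℝ | MemGamma M γ},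
          matPow M θ γ * (CM M γ : ℝ) := by
  classical
  have hM0 : (M : ℝ) ≠ 0 := by
    exact Nat.cast_ne_zero.mpr (Nat.one_le_iff_ne_zero.mp hM)
  set f : (Fin M → Equiv.Perm (Fin n)) → Matrix (Fin n) (Fin n) ℝ :=
    fun σs => (M : ℝ)⁻¹ • ∑ m, Pmat (σs m) with hf
  -- entrywise formula
  have hentry : ∀ σs i j,
      f σs i j = ((Finset.univ.filter (fun m => σs m i = j)).card : ℝ) / M := by
    intro σs i j
    simp only [hf, Matrix.smul_apply, Matrix.sum_apply, Pmat, smul_eq_mul]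
    rw [Finset.sum_boole, inv_mul_eq_div]
  -- every f σs is in Γ
  have hmem : ∀ σs, MemGamma M (f σs) := by
    intro σs
    refine ⟨⟨fun i j => ?_, fun i => ?_, fun j => ?_⟩, fun i j => ?_⟩
    · rw [hentry]; positivity
    · simp only [hf, Matrix.smul_apply, Matrix.sum_apply, Pmat, smul_eq_mul]
      rw [← Finset.mul_sum, Finset.sum_comm]
      have : ∀ m : Fin M, (∑ j, if σs m i = j then (1:ℝ) else 0) = 1 := by
        intro m; simp
      simp only [this, Finset.sum_const, Finset.card_univ, Fintype.card_fin,
        nsmul_eq_mul, mul_one]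
      exact inv_mul_cancel₀ hM0
    · simp only [hf, Matrix.smul_apply, Matrix.sum_apply, Pmat, smul_eq_mul]
      rw [← Finset.mul_sum, Finset.sum_comm]
      have : ∀ m : Fin M, (∑ i, if σs m i = j then (1:ℝ) else 0) = 1 := by
        intro m
        have : ∀ i, (σs m i = j) = (i = (σs m)⁻¹ j) := by
          intro i
          simp [Equiv.apply_eq_iff_eq_symm_apply, Equiv.Perm.inv_def]
        simp [this]
      simp only [this, Finset.sum_const, Finset.card_univ, Fintype.card_fin,
        nsmul_eq_mul, mul_one]
      exact inv_mul_cancel₀ hM0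
    · exact ⟨_, hentry σs i j⟩
  -- exponent formula
  have hfloor : ∀ σs i j,
      ⌊(M : ℝ) * f σs i j⌋₊ = (Finset.univ.filter (fun m => σs m i = j)).card := by
    intro σs i j
    rw [hentry, mul_div_cancel₀ _ hM0, Nat.floor_natCast]
  -- the product over a tuple equals matPow of its average matrix
  have hprod : ∀ σs : Fin M → Equiv.Perm (Fin n),
      (∏ m, ∏ i, θ i (σs m i)) = matPow M θ (f σs) := by
    intro σs
    rw [Finset.prod_comm, matPow]
    refine Finset.prod_congr rfl fun i _ => ?_
    have : ∀ m : Fin M, θ i (σs m i) = ∏ j, θ i j ^ (if σs m i = j then 1 else 0) := by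
      intro m
      rw [Fintype.prod_eq_single ((σs m) i)
        (fun j hj => by rw [if_neg (fun h => hj h.symm), pow_zero])]
      simp
    simp only [this]
    rw [Finset.prod_comm]
    refine Finset.prod_congr rfl fun j _ => ?_
    rw [Finset.prod_pow_eq_pow_sum]
    congr 1
    rw [hfloor]
    simp [Finset.sum_boole]
  -- CM as a filter cardinality
  have hCM : ∀ γ : Matrix (Fin n) (Fin n) ℝ,
      CM M γ = (Finset.univ.filter (fun σs => f σs = γ)).card := by
    intro γ
    rw [CM, Nat.card_eq_fintype_card, Fintype.card_subtype]
    congr 1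
    ext σs
    simp [eq_comm, hf]
  -- the finite index set
  set t : Finset (Matrix (Fin n) (Fin n) ℝ) :=
    (Finset.univ.image f).filter (MemGamma M) with ht
  have hmaps : ∀ σs : Fin M → Equiv.Perm (Fin n), f σs ∈ t := by
    intro σs
    rw [ht, Finset.mem_filter]
    exact ⟨Finset.mem_image_of_mem f (Finset.mem_univ σs), hmem σs⟩
  have key : (perm θ) ^ M = ∑ γ ∈ t, matPow M θ γ * (CM M γ : ℝ) := by
    rw [perm, Fintype.sum_pow]
    calc (∑ σs : Fin M → Equiv.Perm (Fin n), ∏ m, ∏ i, θ i (σs m i))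
        = ∑ σs : Fin M → Equiv.Perm (Fin n), matPow M θ (f σs) :=
          Finset.sum_congr rfl fun σs _ => hprod σs
      _ = ∑ γ ∈ t, ∑ σs ∈ Finset.univ.filter (fun σs => f σs = γ), matPow M θ (f σs) :=
          (Finset.sum_fiberwise_of_maps_to (fun σs _ => hmaps σs) _).symm
      _ = ∑ γ ∈ t, matPow M θ γ * (CM M γ : ℝ) := by
          refine Finset.sum_congr rfl fun γ _ => ?_
          rw [Finset.sum_congr rfl (fun σs h => by
            rw [(Finset.mem_filter.mp h).2] :
            ∀ σs ∈ Finset.univ.filter (fun σs => f σs = γ),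
              matPow M θ (f σs) = matPow M θ γ),
            Finset.sum_const, hCM, nsmul_eq_mul, mul_comm]
  rw [key]
  refine (finsum_mem_eq_sum_of_subset _ ?_ ?_).symm
  · rintro γ ⟨hγs, hγ⟩
    rw [ht, Finset.coe_filter, Set.mem_setOf_eq]
    refine ⟨?_, hγs⟩
    have hCMne : CM M γ ≠ 0 := by
      intro h0
      apply hγ
      simp [h0]
    rw [hCM] at hCMne
    obtain ⟨σs, hσs⟩ := Finset.card_ne_zero.mp hCMne
    rw [← (Finset.mem_filter.mp hσs).2]
    exact Finset.mem_image_of_mem f (Finset.mem_univ σs)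
  · intro γ hγ
    rw [ht, Finset.coe_filter, Set.mem_setOf_eq] at hγ
    exact hγ.2
end

section
/- Let M ≥ 2, n ≥ 1, and γ ∈ Γ_{M,n}. Then C^{scS}_M(γ) · χ(M)^n · perm(γ) = Σ_{σ ∈ S_n(γ)} C^{scS}_{M-1}(γ_σ), where χ(M) = (M/(M-1))^{M-1}, C^{scS}_M(γ) = M^{-nM} · (M!)^{2n} / Π_{i,j} (M·γ(i,j))!, S_n(γ) is the set of permutations σ with γ(i,σ(i)) > 0 for all i, and γ_σ = (1/(M-1))·(M·γ − P_σ). -/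
open scoped BigOperators

open scoped Classical

/-- `γ_σ = (1/(M-1))·(M·γ − P_σ)`. -/
noncomputable def gammaPeel {n : ℕ} (M : ℕ) (γ : Matrix (Fin n) (Fin n) ℝ)
    (σ : Equiv.Perm (Fin n)) : Matrix (Fin n) (Fin n) ℝ :=
  ((M : ℝ) - 1)⁻¹ • ((M : ℝ) • γ - Pmat σ)

/-- `C^{scS}_M(γ) = M^{−nM}·(M!)^{2n} / ∏_{i,j} (M·γ(i,j))!`. -/
noncomputable def CscS {n : ℕ} (M : ℕ) (γ : Matrix (Fin n) (Fin n) ℝ) : ℝ :=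
  ((M : ℝ) ^ (n * M))⁻¹ * (M.factorial : ℝ) ^ (2 * n) /
    ∏ i, ∏ j, ((⌊(M : ℝ) * γ i j⌋₊).factorial : ℝ)

/-- `χ(M) = (M/(M-1))^{M-1}`. -/
noncomputable def chi (M : ℕ) : ℝ := ((M : ℝ) / ((M : ℝ) - 1)) ^ (M - 1)

theorem CscS_recursion {n M : ℕ} (hn : 1 ≤ n) (hM : 2 ≤ M)
    (γ : Matrix (Fin n) (Fin n) ℝ) (hγ : MemGamma M γ) :
    CscS M γ * (chi M) ^ n * perm γ
      = ∑ σ ∈ Finset.univ.filter (fun σ : Equiv.Perm (Fin n) => ∀ i, 0 < γ i (σ i)),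
          CscS (M - 1) (gammaPeel M γ σ) := by
  classical
  obtain ⟨⟨hpos, hrow, hcol⟩, hmul⟩ := hγ
  obtain ⟨m, rfl⟩ : ∃ m, M = m + 1 := ⟨M - 1, by omega⟩
  have hm1 : 1 ≤ m := by omega
  have hmR : (1:ℝ) ≤ (m:ℝ) := by exact_mod_cast hm1
  have hmne : (m:ℝ) ≠ 0 := by positivity
  have hMpos : (0:ℝ) < ((m + 1 : ℕ):ℝ) := by positivity
  -- the integer entries
  set k : Fin n → Fin n → ℕ := fun i j => ⌊((m + 1 : ℕ):ℝ) * γ i j⌋₊ with hkdef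
  have hkval : ∀ i j, ((m + 1 : ℕ):ℝ) * γ i j = (k i j : ℝ) := by
    intro i j
    obtain ⟨c, hc⟩ := hmul i j
    have h1 : ((m + 1 : ℕ):ℝ) * γ i j = (c:ℝ) := by
      rw [hc]; field_simp
    show ((m + 1 : ℕ):ℝ) * γ i j = ((⌊((m + 1 : ℕ):ℝ) * γ i j⌋₊ : ℕ) : ℝ)
    rw [h1, Nat.floor_natCast]
  set P : ℝ := ∏ i, ∏ j, ((k i j).factorial : ℝ) with hPdef
  have hPpos : 0 < P := by
    apply Finset.prod_pos; intro i _
    apply Finset.prod_pos; intro j _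
    exact_mod_cast (k i j).factorial_pos
  have hPne : P ≠ 0 := ne_of_gt hPpos
  have hkpos : ∀ (σ : Equiv.Perm (Fin n)), (∀ i, 0 < γ i (σ i)) → ∀ i,
      1 ≤ k i (σ i) := by
    intro σ hσ i
    have h := hkval i (σ i)
    have h2 : (0:ℝ) < (k i (σ i) : ℝ) := by
      rw [← h]; exact mul_pos hMpos (hσ i)
    exact_mod_cast h2
  -- floor entries of the peeled matrix
  have hfloor : ∀ (σ : Equiv.Perm (Fin n)), (∀ i, 0 < γ i (σ i)) → ∀ i j,
      ⌊((m + 1 - 1 : ℕ):ℝ) * gammaPeel (m + 1) γ σ i j⌋₊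
        = k i j - (if σ i = j then 1 else 0) := by
    intro σ hσ i j
    have hcast : ((m + 1 - 1 : ℕ):ℝ) = ((m + 1 : ℕ):ℝ) - 1 := by push_cast; ring
    have hval : ((m + 1 - 1 : ℕ):ℝ) * gammaPeel (m + 1) γ σ i j
        = (k i j : ℝ) - (if σ i = j then (1:ℝ) else 0) := by
      rw [hcast]
      simp only [gammaPeel, Matrix.smul_apply, Matrix.sub_apply, smul_eq_mul, Pmat]
      rw [← hkval i j]
      have hne : ((m + 1 : ℕ):ℝ) - 1 ≠ 0 := by push_cast; linarith
      field_simp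
    by_cases hij : σ i = j
    · have hk1 : 1 ≤ k i j := by rw [← hij]; exact hkpos σ hσ i
      have h2 : ((m + 1 - 1 : ℕ):ℝ) * gammaPeel (m + 1) γ σ i j
          = ((k i j - 1 : ℕ) : ℝ) := by
        rw [hval, if_pos hij]; push_cast [hk1]; ring
      rw [h2, Nat.floor_natCast, if_pos hij]
    · have h2 : ((m + 1 - 1 : ℕ):ℝ) * gammaPeel (m + 1) γ σ i j = ((k i j : ℕ) : ℝ) := by
        rw [hval, if_neg hij, sub_zero]
      rw [h2, Nat.floor_natCast, if_neg hij, Nat.sub_zero]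
  -- the per-row factorial identity
  have hrowprod : ∀ (σ : Equiv.Perm (Fin n)), (∀ i, 0 < γ i (σ i)) → ∀ i,
      (∏ j, (((k i j - (if σ i = j then 1 else 0)).factorial : ℕ) : ℝ)) * (k i (σ i) : ℝ)
        = ∏ j, ((k i j).factorial : ℝ) := by
    intro σ hσ i
    have hk1 : 1 ≤ k i (σ i) := hkpos σ hσ i
    rw [← Finset.mul_prod_erase Finset.univ _ (Finset.mem_univ (σ i)),
        ← Finset.mul_prod_erase Finset.univ (fun j => ((k i j).factorial : ℝ))
          (Finset.mem_univ (σ i))]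
    have herase : ∀ j ∈ Finset.univ.erase (σ i),
        (((k i j - (if σ i = j then 1 else 0)).factorial : ℕ) : ℝ)
          = ((k i j).factorial : ℝ) := by
      intro j hj
      have : σ i ≠ j := (Finset.mem_erase.mp hj).1.symm
      simp [this]
    rw [Finset.prod_congr rfl herase]
    have hfac : ((k i (σ i) - 1).factorial : ℝ) * (k i (σ i) : ℝ)
        = ((k i (σ i)).factorial : ℝ) := by
      rw [← Nat.cast_mul]
      norm_cast
      rw [Nat.mul_comm]
      exact Nat.mul_factorial_pred (by omega)
    simp only [if_pos rfl, if_true]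
    rw [mul_right_comm, hfac]
  -- value of each summand
  set B : ℝ := (((m + 1 - 1 : ℕ):ℝ) ^ (n * (m + 1 - 1)))⁻¹ *
      ((m + 1 - 1).factorial : ℝ) ^ (2 * n) with hBdef
  have hsummand : ∀ (σ : Equiv.Perm (Fin n)), (∀ i, 0 < γ i (σ i)) →
      CscS (m + 1 - 1) (gammaPeel (m + 1) γ σ) = B * (∏ i, (k i (σ i) : ℝ)) / P := by
    intro σ hσ
    rw [CscS]
    have hQ : (∏ i, ∏ j, ((⌊((m + 1 - 1 : ℕ):ℝ) * gammaPeel (m + 1) γ σ i j⌋₊).factorial : ℝ))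
        = ∏ i, ∏ j, (((k i j - (if σ i = j then 1 else 0)).factorial : ℕ) : ℝ) := by
      apply Finset.prod_congr rfl; intro i _
      apply Finset.prod_congr rfl; intro j _
      rw [hfloor σ hσ i j]
    rw [hQ]
    have hQP : (∏ i, ∏ j, (((k i j - (if σ i = j then 1 else 0)).factorial : ℕ) : ℝ))
        * (∏ i, (k i (σ i) : ℝ)) = P := by
      rw [hPdef, ← Finset.prod_mul_distrib]
      exact Finset.prod_congr rfl (fun i _ => hrowprod σ hσ i)
    have hQne : (∏ i, ∏ j, (((k i j - (if σ i = j then 1 else 0)).factorial : ℕ) : ℝ)) ≠ 0 := by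
      apply ne_of_gt
      apply Finset.prod_pos; intro i _
      apply Finset.prod_pos; intro j _
      exact_mod_cast Nat.factorial_pos _
    have hprodne : (∏ i, (k i (σ i) : ℝ)) ≠ 0 := by
      apply ne_of_gt
      apply Finset.prod_pos; intro i _
      have := hkpos σ hσ i
      exact_mod_cast this
    have hBQ : (((m + 1 - 1 : ℕ):ℝ) ^ (n * (m + 1 - 1)))⁻¹ *
        ((m + 1 - 1).factorial : ℝ) ^ (2 * n) = B := rfl
    rw [hBQ, ← hQP]
    field_simp
  -- rewrite the sum
  rw [Finset.sum_congr rfl (fun σ hσ => hsummand σ (Finset.mem_filter.mp hσ).2)]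
  have hext : ∑ σ ∈ Finset.univ.filter (fun σ : Equiv.Perm (Fin n) => ∀ i, 0 < γ i (σ i)),
        (∏ i, (k i (σ i) : ℝ))
      = ∑ σ : Equiv.Perm (Fin n), ∏ i, (k i (σ i) : ℝ) := by
    apply Finset.sum_filter_of_ne
    intro σ _ hne i
    rcases (hpos i (σ i)).lt_or_eq with h | h
    · exact h
    · exfalso; apply hne
      apply Finset.prod_eq_zero (Finset.mem_univ i)
      rw [← hkval, ← h, mul_zero]
  have step : ∑ σ ∈ Finset.univ.filter (fun σ : Equiv.Perm (Fin n) => ∀ i, 0 < γ i (σ i)),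
        B * (∏ i, (k i (σ i) : ℝ)) / P
      = B / P * ∑ σ ∈ Finset.univ.filter (fun σ : Equiv.Perm (Fin n) => ∀ i, 0 < γ i (σ i)),
        (∏ i, (k i (σ i) : ℝ)) := by
    rw [Finset.mul_sum]
    apply Finset.sum_congr rfl; intro σ _; ring
  rw [step, hext]
  have hperm : (∑ σ : Equiv.Perm (Fin n), ∏ i, (k i (σ i) : ℝ))
      = ((m + 1 : ℕ):ℝ) ^ n * perm γ := by
    rw [perm, Finset.mul_sum]
    apply Finset.sum_congr rfl; intro σ _
    calc ∏ i, (k i (σ i) : ℝ) = ∏ i, (((m + 1 : ℕ):ℝ) * γ i (σ i)) :=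
      Finset.prod_congr rfl (fun i _ => (hkval i (σ i)).symm)
    _ = ((m + 1 : ℕ):ℝ) ^ n * ∏ i, γ i (σ i) := by
      rw [Finset.prod_mul_distrib, Finset.prod_const, Finset.card_univ, Fintype.card_fin]
  rw [hperm]
  -- final coefficient identity
  rw [CscS, chi, hBdef]
  have hP' : (∏ i, ∏ j, ((⌊((m + 1 : ℕ):ℝ) * γ i j⌋₊).factorial : ℝ)) = P := rfl
  rw [hP']
  simp only [Nat.add_sub_cancel]
  rw [Nat.factorial_succ]
  have he : n * (m + 1) = n * m + n := by ring
  rw [he]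
  push_cast
  have h1 : (m:ℝ) + 1 - 1 = (m:ℝ) := by ring
  rw [h1, div_pow, div_pow, ← pow_mul, ← pow_mul, pow_add, mul_pow]
  have hMne : (m:ℝ) + 1 ≠ 0 := by positivity
  have hfacne : (m.factorial : ℝ) ≠ 0 := by exact_mod_cast m.factorial_ne_zero
  field_simp
  ring
end

section
/- Let M ≥ 2, n ≥ 1, and γ ∈ Γ_{M,n}. Define R = {i : ∃ j, 0 < γ(i,j) < 1} and C = {j : ∃ i, 0 < γ(i,j) < 1}. Then C^B_M(γ) · perm(γ̂_{R,C}) = Σ_{σ ∈ S_n(γ)} C^B_{M-1}(γ_σ), where C^B_M(γ) = (M!)^{2n−n²} · Π_{i,j} (M − M·γ(i,j))! / (M·γ(i,j))!, γ̂_{R,C}(i,j) = γ(i,j)·(1−γ(i,j)) / (Π_{(i',j') ∈ R×C} (1−γ(i',j')))^{1/|R|} for (i,j) ∈ R×C (with perm(γ̂_{R,C}) := 1 if R is empty), S_n(γ) = {σ : γ(i,σ(i)) > 0 ∀i}, and γ_σ = (1/(M-1))·(M·γ − P_σ). -/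
open scoped BigOperators

open scoped Classical

/-- `C^B_M(γ) = (M!)^{2n−n²} · ∏_{i,j} (M − M·γ(i,j))! / (M·γ(i,j))!`. -/
noncomputable def CB {n : ℕ} (M : ℕ) (γ : Matrix (Fin n) (Fin n) ℝ) : ℝ :=
  (M.factorial : ℝ) ^ (2 * (n : ℤ) - (n : ℤ) ^ 2) *
    ∏ i, ∏ j, ((M - ⌊(M : ℝ) * γ i j⌋₊).factorial : ℝ) / ((⌊(M : ℝ) * γ i j⌋₊).factorial : ℝ)

/-- Row indices of rows of `γ` containing a fractional entry. -/
noncomputable def fracRows {n : ℕ} (γ : Matrix (Fin n) (Fin n) ℝ) : Finset (Fin n) :=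
  Finset.univ.filter fun i => ∃ j, 0 < γ i j ∧ γ i j < 1

/-- Column indices of columns of `γ` containing a fractional entry. -/
noncomputable def fracCols {n : ℕ} (γ : Matrix (Fin n) (Fin n) ℝ) : Finset (Fin n) :=
  Finset.univ.filter fun j => ∃ i, 0 < γ i j ∧ γ i j < 1

/-- The matrix `γ̂_{R,C}` on the fractional rows/columns of `γ`. -/
noncomputable def gammaHat {n : ℕ} (γ : Matrix (Fin n) (Fin n) ℝ)
    (i j : Fin n) : ℝ :=
  γ i j * (1 - γ i j) /
    (∏ i' ∈ fracRows γ, ∏ j' ∈ fracCols γ, (1 - γ i' j')) ^ ((1 : ℝ) / (fracRows γ).card)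

/-- The permanent of a matrix restricted to index sets `R` (rows) and `C` (columns):
the sum over all bijections `R → C` of the products of the corresponding entries.
It equals `1` when `R` and `C` are empty. -/
noncomputable def permOn {n : ℕ} (A : Matrix (Fin n) (Fin n) ℝ)
    (R C : Finset (Fin n)) : ℝ :=
  ∑ e : {i // i ∈ R} ≃ {j // j ∈ C}, ∏ i : {i // i ∈ R}, A i.1 (e i).1

/-!
Write `k = M γ`, a matrix of natural numbers. Peeling `σ ∈ S_n(γ)` off `γ` lowers `k` by one
exactly on the graph of `σ`, so it multiplies the factor `(M - k)! / k!` of `C^B` by `M γ(i, j)`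
on the graph and by `(M (1 - γ(i, j)))⁻¹` off it. The bare powers of `M` multiply to
`M^(2n - n²)`, which turns `((M - 1)!)^(2n - n²)` back into `(M!)^(2n - n²)`. A row outside `R`
is a unit vector: it contributes `1` and forces `σ`, so `σ` is determined by its restriction
`R ≃ C`. A row in `R` contributes `γ(i, σ i) (1 - γ(i, σ i)) / ∏_{j ∈ C} (1 - γ(i, j))`, which is
`γ̂(i, σ i)` once the normalisation is spread evenly over the `|R|` rows. Summing over `σ` gives
the permanent of `γ̂` on `R × C`, the bijections `R ≃ C` leaving the support of `γ` contributing
`0`.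
-/

open Finset
open scoped Matrix

theorem Equiv.subtypeCongr_apply_of_pos {α : Type*} {p q : α → Prop} [DecidablePred p]
    [DecidablePred q] (e : {x // p x} ≃ {x // q x}) (f : {x // ¬p x} ≃ {x // ¬q x}) {a : α}
    (ha : p a) : e.subtypeCongr f a = e ⟨a, ha⟩ := by
  simp [Equiv.subtypeCongr, Equiv.sumCompl_symm_apply_of_pos ha]

theorem Equiv.subtypeCongr_apply_of_neg {α : Type*} {p q : α → Prop} [DecidablePred p]
    [DecidablePred q] (e : {x // p x} ≃ {x // q x}) (f : {x // ¬p x} ≃ {x // ¬q x}) {a : α}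
    (ha : ¬p a) : e.subtypeCongr f a = f ⟨a, ha⟩ := by
  simp [Equiv.subtypeCongr, Equiv.sumCompl_symm_apply_of_neg ha]

theorem prod_div_rpow_one_div_card {ι : Type*} {s : Finset ι} (hs : s.Nonempty) (f : ι → ℝ)
    {P : ℝ} (hP : 0 ≤ P) :
    ∏ i ∈ s, f i / P ^ ((1 : ℝ) / s.card) = (∏ i ∈ s, f i) / P := by
  rw [prod_div_distrib, prod_const, one_div, Real.rpow_inv_natCast_pow hP hs.card_pos.ne']

theorem prod_prod_ite_eq_zpow {ι : Type*} [Fintype ι] [DecidableEq ι] (σ : ι → ι)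
    {x : ℝ} (hx : x ≠ 0) :
    ∏ i, ∏ j, (if σ i = j then x else x⁻¹)
      = x ^ (2 * (Fintype.card ι : ℤ) - (Fintype.card ι : ℤ) ^ 2) := by
  have hrow : ∀ i, ∏ j, (if σ i = j then x else x⁻¹) = x ^ 2 * x⁻¹ ^ Fintype.card ι := by
    intro i
    have hsplit : ∀ j, (if σ i = j then x else x⁻¹) = (if σ i = j then x ^ 2 else 1) * x⁻¹ := by
      intro j
      split_ifs <;> field_simp
    simp_rw [hsplit, prod_mul_distrib, prod_ite_eq, if_pos (mem_univ _), prod_const, card_univ]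
  rw [prod_congr rfl fun i _ => hrow i, prod_const, card_univ, zpow_sub₀ hx]
  norm_cast
  rw [mul_pow, ← pow_mul, inv_pow, inv_pow, ← pow_mul, div_eq_mul_inv, sq]

namespace IsDoublyStochastic

variable {n : ℕ} {γ : Matrix (Fin n) (Fin n) ℝ}

theorem transpose (h : IsDoublyStochastic γ) : IsDoublyStochastic γᵀ :=
  ⟨fun i j => h.1 j i, h.2.2, h.2.1⟩

theorem le_one (h : IsDoublyStochastic γ) (i j : Fin n) : γ i j ≤ 1 :=
  h.2.1 i ▸ single_le_sum (fun j' _ => h.1 i j') (mem_univ j)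

theorem eq_col_of_eq_one (h : IsDoublyStochastic γ) {i j j' : Fin n} (hij : γ i j = 1)
    (hij' : 0 < γ i j') : j' = j := by
  by_contra hne
  have hpair : γ i j + γ i j' ≤ 1 := by
    rw [← sum_pair (Ne.symm hne), ← h.2.1 i]
    exact sum_le_sum_of_subset_of_nonneg (subset_univ _) fun k _ _ => h.1 i k
  linarith

theorem eq_row_of_eq_one (h : IsDoublyStochastic γ) {i i' j : Fin n} (hij : γ i j = 1)
    (hi'j : 0 < γ i' j) : i' = i :=
  h.transpose.eq_col_of_eq_one (i := j) hij hi'j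

theorem notMem_fracRows_of_eq_one (h : IsDoublyStochastic γ) {i j : Fin n}
    (hij : γ i j = 1) : i ∉ fracRows γ := by
  simp only [fracRows, mem_filter, mem_univ, true_and, not_exists, not_and, not_lt]
  intro j' hpos
  rw [h.eq_col_of_eq_one hij hpos, hij]

theorem notMem_fracCols_of_eq_one (h : IsDoublyStochastic γ) {i j : Fin n}
    (hij : γ i j = 1) : j ∉ fracCols γ :=
  h.transpose.notMem_fracRows_of_eq_one (i := j) (j := i) hij

theorem eq_one_of_notMem_fracRows (h : IsDoublyStochastic γ) {i j : Fin n}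
    (hi : i ∉ fracRows γ) (hpos : 0 < γ i j) : γ i j = 1 := by
  by_contra hne
  exact hi (mem_filter.2 ⟨mem_univ i, j, hpos, lt_of_le_of_ne (h.le_one i j) hne⟩)

theorem exists_eq_one_of_notMem_fracRows (h : IsDoublyStochastic γ) {i : Fin n}
    (hi : i ∉ fracRows γ) : ∃ j, γ i j = 1 := by
  obtain ⟨j, -, hj⟩ := exists_ne_zero_of_sum_ne_zero (h.2.1 i ▸ one_ne_zero : ∑ j, γ i j ≠ 0)
  exact ⟨j, h.eq_one_of_notMem_fracRows hi (lt_of_le_of_ne (h.1 i j) (Ne.symm hj))⟩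

theorem exists_eq_one_of_notMem_fracCols (h : IsDoublyStochastic γ) {j : Fin n}
    (hj : j ∉ fracCols γ) : ∃ i, γ i j = 1 :=
  h.transpose.exists_eq_one_of_notMem_fracRows (i := j) hj

theorem lt_one_of_mem_fracRows (h : IsDoublyStochastic γ) {i : Fin n} (hi : i ∈ fracRows γ)
    (j : Fin n) : γ i j < 1 :=
  lt_of_le_of_ne (h.le_one i j) fun hij => h.notMem_fracRows_of_eq_one hij hi

theorem eq_zero_of_mem_fracRows_of_notMem_fracCols (h : IsDoublyStochastic γ) {i j : Fin n}
    (hi : i ∈ fracRows γ) (hj : j ∉ fracCols γ) : γ i j = 0 := by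
  refine ((h.1 i j).eq_or_lt.resolve_right fun hpos => hj ?_).symm
  exact mem_filter.2 ⟨mem_univ j, i, hpos, h.lt_one_of_mem_fracRows hi j⟩

theorem exists_equiv_eq_one (h : IsDoublyStochastic γ) :
    ∃ φ : {i // i ∉ fracRows γ} ≃ {j // j ∉ fracCols γ}, ∀ i, γ i.1 (φ i).1 = 1 := by
  choose f hf using fun i : {i // i ∉ fracRows γ} => h.exists_eq_one_of_notMem_fracRows i.2
  refine ⟨Equiv.ofBijective (fun i => ⟨f i, h.notMem_fracCols_of_eq_one (hf i)⟩) ⟨?_, ?_⟩, hf⟩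
  · intro i i' hii'
    have hcol : f i = f i' := congrArg Subtype.val hii'
    exact Subtype.ext (h.eq_row_of_eq_one (hf i') (by rw [← hcol, hf i]; exact one_pos))
  · intro j
    obtain ⟨i, hij⟩ := h.exists_eq_one_of_notMem_fracCols j.2
    refine ⟨⟨i, h.notMem_fracRows_of_eq_one hij⟩, Subtype.ext ?_⟩
    exact h.eq_col_of_eq_one hij ((hf ⟨i, _⟩).symm ▸ one_pos)

theorem mem_fracRows_iff_apply_mem_fracCols (h : IsDoublyStochastic γ) {σ : Equiv.Perm (Fin n)}
    (hσ : ∀ i, 0 < γ i (σ i)) (i : Fin n) : i ∈ fracRows γ ↔ σ i ∈ fracCols γ := by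
  refine ⟨fun hi => ?_, fun hσi => ?_⟩
  · exact mem_filter.2 ⟨mem_univ _, i, hσ i, h.lt_one_of_mem_fracRows hi (σ i)⟩
  · by_contra hi
    exact h.notMem_fracCols_of_eq_one (h.eq_one_of_notMem_fracRows hi (hσ i)) hσi

-- Only permutations inside the support of `γ` contribute, and such a permutation is determined
-- by its restriction to the fractional rows, since outside them it must follow the unit entries.
theorem permOn_eq_sum_prod (h : IsDoublyStochastic γ) (A : Matrix (Fin n) (Fin n) ℝ)
    (hA : ∀ i j, γ i j = 0 → A i j = 0) :
    permOn A (fracRows γ) (fracCols γ)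
      = ∑ σ ∈ univ.filter (fun σ : Equiv.Perm (Fin n) => ∀ i, 0 < γ i (σ i)),
          ∏ i ∈ fracRows γ, A i (σ i) := by
  obtain ⟨φ, hφ⟩ := h.exists_equiv_eq_one
  set S := univ.filter fun σ : Equiv.Perm (Fin n) => ∀ i, 0 < γ i (σ i)
  let extend : ({i // i ∈ fracRows γ} ≃ {j // j ∈ fracCols γ}) → Equiv.Perm (Fin n) :=
    fun e => e.subtypeCongr φ
  have extend_of_mem : ∀ e i (hi : i ∈ fracRows γ), extend e i = e ⟨i, hi⟩ :=
    fun e _ hi => Equiv.subtypeCongr_apply_of_pos e φ hi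
  have extend_of_notMem : ∀ e i (hi : i ∉ fracRows γ), extend e i = φ ⟨i, hi⟩ :=
    fun e _ hi => Equiv.subtypeCongr_apply_of_neg e φ hi
  have extend_injective : Function.Injective extend := by
    intro e e' hee'
    ext i
    rw [← extend_of_mem e i.1 i.2, ← extend_of_mem e' i.1 i.2, hee']
  have support_subset : S ⊆ univ.image extend := by
    intro σ hσS
    have hσ := (mem_filter.1 hσS).2
    refine mem_image.2 ⟨σ.subtypeEquiv (h.mem_fracRows_iff_apply_mem_fracCols hσ), mem_univ _,
      Equiv.ext fun i => ?_⟩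
    by_cases hi : i ∈ fracRows γ
    · rw [extend_of_mem _ i hi]
      rfl
    · rw [extend_of_notMem _ i hi]
      exact h.eq_col_of_eq_one (h.eq_one_of_notMem_fracRows hi (hσ i)) (hφ ⟨i, hi⟩ ▸ one_pos)
  have prod_eq_zero : ∀ σ ∈ univ.image extend, σ ∉ S → ∏ i ∈ fracRows γ, A i (σ i) = 0 := by
    intro σ hσ hσS
    obtain ⟨e, -, rfl⟩ := mem_image.1 hσ
    obtain ⟨i, hi⟩ : ∃ i, γ i (extend e i) ≤ 0 := by simpa [S] using hσS
    have hiR : i ∈ fracRows γ := by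
      by_contra hiR
      rw [extend_of_notMem e i hiR] at hi
      linarith [hφ ⟨i, hiR⟩]
    exact prod_eq_zero hiR (hA _ _ (le_antisymm hi (h.1 _ _)))
  calc permOn A (fracRows γ) (fracCols γ)
      = ∑ e, ∏ i ∈ fracRows γ, A i (extend e i) := by
        refine sum_congr rfl fun e _ => ?_
        rw [← prod_coe_sort (fracRows γ) fun i => A i (extend e i)]
        exact prod_congr rfl fun i _ => by rw [extend_of_mem e i.1 i.2]
    _ = ∑ σ ∈ univ.image extend, ∏ i ∈ fracRows γ, A i (σ i) :=
        (sum_image (f := fun σ => ∏ i ∈ fracRows γ, A i (σ i))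
          fun e _ e' _ hee' => extend_injective hee').symm
    _ = ∑ σ ∈ S, ∏ i ∈ fracRows γ, A i (σ i) := (sum_subset support_subset prod_eq_zero).symm

end IsDoublyStochastic

-- Up to a power of `M`, the factor by which the `(i, j)` factor of `C^B` changes when `σ` is
-- peeled off `γ`.
noncomputable def peelWeight {n : ℕ} (γ : Matrix (Fin n) (Fin n) ℝ) (σ : Equiv.Perm (Fin n))
    (i j : Fin n) : ℝ :=
  if σ i = j then γ i j else (1 - γ i j)⁻¹

namespace IsDoublyStochastic

variable {n : ℕ} {γ : Matrix (Fin n) (Fin n) ℝ}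

theorem prod_peelWeight_of_notMem_fracRows (h : IsDoublyStochastic γ) {σ : Equiv.Perm (Fin n)}
    (hσ : ∀ i, 0 < γ i (σ i)) {i : Fin n} (hi : i ∉ fracRows γ) :
    ∏ j, peelWeight γ σ i j = 1 := by
  have hσi := h.eq_one_of_notMem_fracRows hi (hσ i)
  refine prod_eq_one fun j _ => ?_
  rw [peelWeight]
  split_ifs with hij
  · rw [← hij, hσi]
  · have hzero : γ i j = 0 :=
      ((h.1 i j).eq_or_lt.resolve_right fun hpos => hij (h.eq_col_of_eq_one hσi hpos).symm).symm
    rw [hzero, sub_zero, inv_one]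

theorem prod_peelWeight_of_mem_fracRows (h : IsDoublyStochastic γ) (σ : Equiv.Perm (Fin n))
    {i : Fin n} (hi : i ∈ fracRows γ) :
    ∏ j, peelWeight γ σ i j
      = γ i (σ i) * (1 - γ i (σ i)) * ∏ j ∈ fracCols γ, (1 - γ i j)⁻¹ := by
  have hne : 1 - γ i (σ i) ≠ 0 := (sub_pos.2 (h.lt_one_of_mem_fracRows hi _)).ne'
  have hoff : ∏ j ∈ univ.erase (σ i), peelWeight γ σ i j
      = ∏ j ∈ univ.erase (σ i), (1 - γ i j)⁻¹ :=
    prod_congr rfl fun j hj => if_neg (ne_of_mem_erase hj).symm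
  have hcols : ∏ j ∈ fracCols γ, (1 - γ i j)⁻¹ = ∏ j, (1 - γ i j)⁻¹ :=
    prod_subset (subset_univ _) fun j _ hj => by
      rw [h.eq_zero_of_mem_fracRows_of_notMem_fracCols hi hj, sub_zero, inv_one]
  rw [← mul_prod_erase univ _ (mem_univ (σ i)), peelWeight, if_pos rfl, hoff, hcols,
    ← mul_prod_erase univ (fun j => (1 - γ i j)⁻¹) (mem_univ (σ i))]
  field_simp

theorem prod_gammaHat (h : IsDoublyStochastic γ) (σ : Equiv.Perm (Fin n)) :
    ∏ i ∈ fracRows γ, gammaHat γ i (σ i)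
      = (∏ i ∈ fracRows γ, γ i (σ i) * (1 - γ i (σ i)))
        / ∏ i ∈ fracRows γ, ∏ j ∈ fracCols γ, (1 - γ i j) := by
  rcases (fracRows γ).eq_empty_or_nonempty with hR | hR
  · simp [hR]
  · exact prod_div_rpow_one_div_card hR _
      (prod_nonneg fun i _ => prod_nonneg fun j _ => sub_nonneg.2 (h.le_one i j))

theorem prod_prod_peelWeight (h : IsDoublyStochastic γ) {σ : Equiv.Perm (Fin n)}
    (hσ : ∀ i, 0 < γ i (σ i)) :
    ∏ i, ∏ j, peelWeight γ σ i j = ∏ i ∈ fracRows γ, gammaHat γ i (σ i) := by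
  rw [h.prod_gammaHat σ,
    ← prod_subset (subset_univ _) fun i _ hi => h.prod_peelWeight_of_notMem_fracRows hσ hi,
    prod_congr rfl fun i hi => h.prod_peelWeight_of_mem_fracRows σ hi, prod_mul_distrib,
    div_eq_mul_inv, ← prod_inv_distrib]
  simp only [prod_inv_distrib]

end IsDoublyStochastic

noncomputable def factorialRatio (M k : ℕ) : ℝ := ((M - k).factorial : ℝ) / (k.factorial : ℝ)

theorem CB_eq_prod_factorialRatio {n : ℕ} (M : ℕ) (γ : Matrix (Fin n) (Fin n) ℝ) :
    CB M γ = (M.factorial : ℝ) ^ (2 * (n : ℤ) - (n : ℤ) ^ 2) *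
      ∏ i, ∏ j, factorialRatio M ⌊(M : ℝ) * γ i j⌋₊ := rfl

theorem factorialRatio_pred_pred {M k : ℕ} (hk : k ≠ 0) (hkM : k ≤ M) :
    factorialRatio (M - 1) (k - 1) = factorialRatio M k * k := by
  rw [factorialRatio, factorialRatio, show M - 1 - (k - 1) = M - k by omega,
    ← Nat.mul_factorial_pred hk]
  push_cast
  field_simp

theorem factorialRatio_pred {M k : ℕ} (hkM : k < M) :
    factorialRatio (M - 1) k = factorialRatio M k / (M - k : ℕ) := by
  rw [factorialRatio, factorialRatio, show M - 1 - k = M - k - 1 by omega,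
    ← Nat.mul_factorial_pred (show M - k ≠ 0 by omega)]
  have hMk : ((M - k : ℕ) : ℝ) ≠ 0 := by exact_mod_cast (show M - k ≠ 0 by omega)
  push_cast
  field_simp

theorem natCast_pred_mul_gammaPeel {n M : ℕ} (hM : 1 < M) (γ : Matrix (Fin n) (Fin n) ℝ)
    (σ : Equiv.Perm (Fin n)) (i j : Fin n) :
    ((M - 1 : ℕ) : ℝ) * gammaPeel M γ σ i j = M * γ i j - Pmat σ i j := by
  have hM' : (M : ℝ) - 1 ≠ 0 := sub_ne_zero.2 (by exact_mod_cast hM.ne')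
  rw [Nat.cast_pred (by omega), gammaPeel, Matrix.smul_apply, smul_eq_mul, ← mul_assoc,
    mul_inv_cancel₀ hM', one_mul, Matrix.sub_apply, Matrix.smul_apply, smul_eq_mul]

theorem floor_pred_mul_gammaPeel {n M : ℕ} (hM : 1 < M) (γ : Matrix (Fin n) (Fin n) ℝ)
    (σ : Equiv.Perm (Fin n)) (i j : Fin n) :
    ⌊((M - 1 : ℕ) : ℝ) * gammaPeel M γ σ i j⌋₊
      = ⌊(M : ℝ) * γ i j⌋₊ - if σ i = j then 1 else 0 := by
  rw [natCast_pred_mul_gammaPeel hM, Pmat]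
  split_ifs <;> simp

namespace MemGamma

variable {n M : ℕ} {γ : Matrix (Fin n) (Fin n) ℝ}

theorem natCast_floor (hγ : MemGamma M γ) (hM : M ≠ 0) (i j : Fin n) :
    (⌊(M : ℝ) * γ i j⌋₊ : ℝ) = M * γ i j := by
  obtain ⟨k, hk⟩ := hγ.2 i j
  rw [hk, mul_div_cancel₀ _ (Nat.cast_ne_zero.2 hM), Nat.floor_natCast]

theorem factorialRatio_peel (hγ : MemGamma M γ) (hM : 1 < M) {σ : Equiv.Perm (Fin n)}
    (hσ : ∀ i, 0 < γ i (σ i)) (i j : Fin n) :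
    factorialRatio (M - 1) ⌊((M - 1 : ℕ) : ℝ) * gammaPeel M γ σ i j⌋₊
      = factorialRatio M ⌊(M : ℝ) * γ i j⌋₊ *
        ((if σ i = j then (M : ℝ) else (M : ℝ)⁻¹) * peelWeight γ σ i j) := by
  have hM0 : (0 : ℝ) < M := by exact_mod_cast (by omega : 0 < M)
  have hk := hγ.natCast_floor (by omega) i j
  rw [floor_pred_mul_gammaPeel hM γ, peelWeight]
  set k := ⌊(M : ℝ) * γ i j⌋₊
  split_ifs with hij
  · have hk0 : k ≠ 0 := by
      rw [← Nat.cast_ne_zero (R := ℝ), hk]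
      exact (mul_pos hM0 (hij ▸ hσ i)).ne'
    have hkM : k ≤ M := by
      exact_mod_cast hk ▸ mul_le_of_le_one_right hM0.le (hγ.1.le_one i j)
    rw [factorialRatio_pred_pred hk0 hkM, hk]
  · have hlt : γ i j < 1 :=
      lt_of_le_of_ne (hγ.1.le_one i j) fun h1 => hij (hγ.1.eq_col_of_eq_one h1 (hσ i))
    have hkM : k < M := by
      exact_mod_cast hk ▸ mul_lt_of_lt_one_right hM0 hlt
    rw [Nat.sub_zero, factorialRatio_pred hkM, Nat.cast_sub hkM.le, hk]
    field_simp

theorem CB_pred_gammaPeel (hγ : MemGamma M γ) (hM : 1 < M) {σ : Equiv.Perm (Fin n)}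
    (hσ : ∀ i, 0 < γ i (σ i)) :
    CB (M - 1) (gammaPeel M γ σ) = CB M γ * ∏ i, ∏ j, peelWeight γ σ i j := by
  have hM0 : (M : ℝ) ≠ 0 := by exact_mod_cast (by omega : M ≠ 0)
  have hfactorial : (M.factorial : ℝ) = M * (M - 1).factorial := by
    exact_mod_cast (Nat.mul_factorial_pred (by omega)).symm
  simp only [CB_eq_prod_factorialRatio, factorialRatio_peel hγ hM hσ, prod_mul_distrib,
    prod_prod_ite_eq_zpow σ hM0, Fintype.card_fin, hfactorial, mul_zpow]
  ring

end MemGamma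

theorem CB_recursion_general {n M : ℕ} (hM : 2 ≤ M)
    (γ : Matrix (Fin n) (Fin n) ℝ) (hγ : MemGamma M γ) :
    CB M γ * permOn (fun i j => gammaHat γ i j) (fracRows γ) (fracCols γ)
      = ∑ σ ∈ Finset.univ.filter (fun σ : Equiv.Perm (Fin n) => ∀ i, 0 < γ i (σ i)),
          CB (M - 1) (gammaPeel M γ σ) := by
  have hγ_support : ∀ i j, γ i j = 0 → gammaHat γ i j = 0 := fun i j hij => by
    simp [gammaHat, hij]
  rw [hγ.1.permOn_eq_sum_prod _ hγ_support, mul_sum]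
  refine sum_congr rfl fun σ hσ => ?_
  have hσ_pos := (mem_filter.1 hσ).2
  rw [hγ.CB_pred_gammaPeel hM hσ_pos, hγ.1.prod_prod_peelWeight hσ_pos]

theorem CB_recursion {n M : ℕ} (hn : 1 ≤ n) (hM : 2 ≤ M)
    (γ : Matrix (Fin n) (Fin n) ℝ) (hγ : MemGamma M γ) :
    CB M γ * permOn (fun i j => gammaHat γ i j) (fracRows γ) (fracCols γ)
      = ∑ σ ∈ Finset.univ.filter (fun σ : Equiv.Perm (Fin n) => ∀ i, 0 < γ i (σ i)),
          CB (M - 1) (gammaPeel M γ σ) :=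
  CB_recursion_general hM γ hγ
end

section
/- Let γ be a doubly stochastic n×n matrix, R = {i : ∃ j, 0 < γ(i,j) < 1}, C = {j : ∃ i, 0 < γ(i,j) < 1}. If R is non-empty, then the restricted matrix γ_{R,C} = (γ(i,j))_{(i,j)∈R×C} is doubly stochastic, i.e., all its row sums and column sums equal 1. -/
open scoped BigOperators Classical

theorem restricted_doublyStochastic {n : ℕ} (γ : Matrix (Fin n) (Fin n) ℝ)
    (hγ : IsDoublyStochastic γ) (hR : (fracRows γ).Nonempty) :
    (∀ i ∈ fracRows γ, ∑ j ∈ fracCols γ, γ i j = 1) ∧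
    (∀ j ∈ fracCols γ, ∑ i ∈ fracRows γ, γ i j = 1) := by
  obtain ⟨hpos, hrow, hcol⟩ := hγ
  constructor
  · intro i hi
    simp only [fracRows, Finset.mem_filter] at hi
    obtain ⟨-, j₀, hj₀pos, hj₀lt⟩ := hi
    have hj₀C : j₀ ∈ fracCols γ := by
      simp only [fracCols, Finset.mem_filter]
      exact ⟨Finset.mem_univ _, i, hj₀pos, hj₀lt⟩
    have hzero : ∀ j ∈ Finset.univ, j ∉ fracCols γ → γ i j = 0 := by
      intro j _ hj
      simp only [fracCols, Finset.mem_filter, Finset.mem_univ, true_and] at hj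
      push_neg at hj
      rcases lt_or_ge (γ i j) 1 with h1 | h1
      · have := hj i
        rcases lt_or_eq_of_le (hpos i j) with h0 | h0
        · linarith [this h0]
        · exact h0.symm
      · exfalso
        have hne : j ≠ j₀ := fun h => by rw [h] at h1; linarith
        have hsub : ({j, j₀} : Finset (Fin n)) ⊆ Finset.univ := Finset.subset_univ _
        have hle : ∑ k ∈ ({j, j₀} : Finset (Fin n)), γ i k ≤ ∑ k, γ i k :=
          Finset.sum_le_sum_of_subset_of_nonneg hsub (fun k _ _ => hpos i k)
        rw [Finset.sum_pair hne, hrow i] at hle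
        linarith
    rw [← hrow i]
    exact Finset.sum_subset (Finset.subset_univ _) hzero
  · intro j hj
    simp only [fracCols, Finset.mem_filter] at hj
    obtain ⟨-, i₀, hi₀pos, hi₀lt⟩ := hj
    have hzero : ∀ i ∈ Finset.univ, i ∉ fracRows γ → γ i j = 0 := by
      intro i _ hi
      simp only [fracRows, Finset.mem_filter, Finset.mem_univ, true_and] at hi
      push_neg at hi
      rcases lt_or_ge (γ i j) 1 with h1 | h1
      · have := hi j
        rcases lt_or_eq_of_le (hpos i j) with h0 | h0
        · linarith [this h0]
        · exact h0.symm
      · exfalso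
        have hne : i ≠ i₀ := fun h => by rw [h] at h1; linarith
        have hsub : ({i, i₀} : Finset (Fin n)) ⊆ Finset.univ := Finset.subset_univ _
        have hle : ∑ k ∈ ({i, i₀} : Finset (Fin n)), γ k j ≤ ∑ k, γ k j :=
          Finset.sum_le_sum_of_subset_of_nonneg hsub (fun k _ _ => hpos k j)
        rw [Finset.sum_pair hne, hcol j] at hle
        linarith
    rw [← hcol j]
    exact Finset.sum_subset (Finset.subset_univ _) hzero
end

section
/- For all M ≥ 1, n ≥ 1, and γ ∈ Γ_{M,n}, the coefficients satisfy C_M(γ) ≤ (M^M/M!)^n · C^{scS}_M(γ), equivalently C_M(γ) · Π_{i,j}(M·γ(i,j))! ≤ (M!)^n. -/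
open scoped BigOperators

section Row
variable {M n : ℕ} (c : Fin n → ℕ)

noncomputable def rowMap (hc : ∑ j, c j = M)
    (fp : {f : Fin M → Fin n // ∀ j, Fintype.card {m // f m = j} = c j} ×
      (∀ j, Equiv.Perm (Fin (c j)))) : Equiv.Perm (Fin M) :=
  (Equiv.sigmaFiberEquiv fp.1.1).symm.trans <|
    (Equiv.sigmaCongrRight (fun j =>
      (Fintype.equivFinOfCardEq (fp.1.2 j)).trans (fp.2 j))).trans <|
    Fintype.equivFinOfCardEq (by simp [hc])

lemma rowMap_apply (hc : ∑ j, c j = M)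
    (f : {f : Fin M → Fin n // ∀ j, Fintype.card {m // f m = j} = c j})
    (π : ∀ j, Equiv.Perm (Fin (c j))) (j : Fin n) (s : {m // f.1 m = j}) :
    rowMap c hc (f, π) s.1 =
      Fintype.equivFinOfCardEq (by simp [hc] : Fintype.card (Σ j, Fin (c j)) = M)
        ⟨j, π j (Fintype.equivFinOfCardEq (f.2 j) s)⟩ := by
  have h : (Equiv.sigmaFiberEquiv f.1).symm s.1 = ⟨j, s⟩ := by
    rw [Equiv.symm_apply_eq]; rfl
  simp [rowMap, h]

lemma rowMap_injective (hc : ∑ j, c j = M) : Function.Injective (rowMap c hc) := by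
  rintro ⟨f, π⟩ ⟨g, ρ⟩ h
  have hfg : f = g := by
    apply Subtype.ext; funext m
    have h1 := rowMap_apply c hc f π (f.1 m) ⟨m, rfl⟩
    have h2 := rowMap_apply c hc g ρ (g.1 m) ⟨m, rfl⟩
    have := (Fintype.equivFinOfCardEq _).injective
      (h1.symm.trans ((congrFun (congrArg _ h) m).trans h2))
    exact (Sigma.mk.inj_iff.mp this).1
  subst hfg
  have hπρ : π = ρ := by
    funext j; apply Equiv.ext; intro x
    set s : {m // f.1 m = j} := (Fintype.equivFinOfCardEq (f.2 j)).symm x with hs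
    have h1 := rowMap_apply c hc f π j s
    have h2 := rowMap_apply c hc f ρ j s
    rw [Equiv.apply_symm_apply] at h1 h2
    have := h1.symm.trans ((congrFun (congrArg _ h) s.1).trans h2)
    have := (Fintype.equivFinOfCardEq _).injective this
    exact eq_of_heq (Sigma.mk.inj_iff.mp this).2
  rw [hπρ]

lemma row_bound (hc : ∑ j, c j = M) :
    Nat.card {f : Fin M → Fin n // ∀ j, Fintype.card {m // f m = j} = c j} *
      ∏ j, (c j).factorial ≤ M.factorial := by
  have := Fintype.card_le_of_injective _ (rowMap_injective c hc)
  simpa [Nat.card_eq_fintype_card, Fintype.card_perm] using this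

end Row

theorem CM_mul_factorials_le {n M : ℕ} (hn : 1 ≤ n) (hM : 1 ≤ M)
    (γ : Matrix (Fin n) (Fin n) ℝ) (hγ : MemGamma M γ) :
    CM M γ * ∏ i, ∏ j, (⌊(M : ℝ) * γ i j⌋₊).factorial ≤ M.factorial ^ n := by
  have hM0 : (M : ℝ) ≠ 0 := by positivity
  set c : Fin n → Fin n → ℕ := fun i j => ⌊(M : ℝ) * γ i j⌋₊ with hcdef
  have hcast : ∀ i j, (c i j : ℝ) = (M : ℝ) * γ i j := by
    intro i j
    obtain ⟨k, hk⟩ := hγ.2 i j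
    rw [hcdef]
    simp only [hk]
    rw [mul_div_cancel₀ _ hM0]
    rw [Nat.floor_natCast]
  have hrow : ∀ i, ∑ j, c i j = M := by
    intro i
    have : ((∑ j, c i j : ℕ) : ℝ) = (M : ℝ) := by
      push_cast
      simp only [hcast]
      rw [← Finset.mul_sum, hγ.1.2.1 i, mul_one]
    exact_mod_cast this
  -- the injection from tuples to families of fiber-constrained functions
  have hfib : ∀ (σs : Fin M → Equiv.Perm (Fin n)),
      γ = (M : ℝ)⁻¹ • ∑ m, Pmat (σs m) →
      ∀ i j, Fintype.card {m // σs m i = j} = c i j := by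
    intro σs hσ i j
    have hval : (M : ℝ) * γ i j = ∑ m, (if σs m i = j then (1:ℝ) else 0) := by
      rw [hσ]
      simp [Matrix.smul_apply, Matrix.sum_apply, Pmat, ← mul_assoc,
        mul_inv_cancel₀ hM0]
    have : ((c i j : ℕ) : ℝ) = ((Fintype.card {m // σs m i = j} : ℕ) : ℝ) := by
      rw [hcast, hval, Fintype.card_subtype]
      rw [Finset.sum_boole]
    exact_mod_cast this.symm
  have hinj : Function.Injective
      (fun (σs : {σs : Fin M → Equiv.Perm (Fin n) //
          γ = (M : ℝ)⁻¹ • ∑ m, Pmat (σs m)}) =>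
        (fun i => (⟨fun m => σs.1 m i, hfib σs.1 σs.2 i⟩ :
          {f : Fin M → Fin n // ∀ j, Fintype.card {m // f m = j} = c i j}))) := by
    intro σs τs h
    apply Subtype.ext; funext m
    apply Equiv.ext; intro i
    have := congrFun h i
    have := congrArg Subtype.val this
    exact congrFun this m
  have hcard : CM M γ ≤ ∏ i, Nat.card
      {f : Fin M → Fin n // ∀ j, Fintype.card {m // f m = j} = c i j} := by
    rw [← Nat.card_pi]
    exact Nat.card_le_card_of_injective _ hinj
  calc CM M γ * ∏ i, ∏ j, (c i j).factorial
      ≤ (∏ i, Nat.card {f : Fin M → Fin n //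
          ∀ j, Fintype.card {m // f m = j} = c i j}) * ∏ i, ∏ j, (c i j).factorial :=
        Nat.mul_le_mul_right _ hcard
    _ = ∏ i, (Nat.card {f : Fin M → Fin n //
          ∀ j, Fintype.card {m // f m = j} = c i j} * ∏ j, (c i j).factorial) := by
        rw [Finset.prod_mul_distrib]
    _ ≤ ∏ i, M.factorial := Finset.prod_le_prod' (fun i _ => row_bound _ (hrow i))
    _ = M.factorial ^ n := by simp
end

section
/- Let θ be an n×n matrix with strictly positive diagonal entries and zeros elsewhere. Then for every M ≥ 1, perm(θ) = (M^n/(M!)^{n/M}) · perm_{scS,M}(θ), where perm_{scS,M}(θ) = (perm(θ ⊗ U_{M,M}))^{1/M} and U_{M,M} is the M×M all-(1/M) matrix. -/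
open scoped BigOperators Kronecker

/-! For diagonal `θ`, the Kronecker product `θ ⊗ U_{M,M}` is, up to reindexing, block diagonal
with constant blocks `θᵢᵢ / M`, whose permanents are `M! (θᵢᵢ / M)^M`. Hence
`perm (θ ⊗ U_{M,M}) = (M!)ⁿ (perm θ / Mⁿ)^M`, and taking `M`-th roots (all quantities are
nonnegative) gives the identity. -/

/-- The permanent of a square real matrix over an arbitrary finite index type. -/
noncomputable def permG {α : Type*} [Fintype α] [DecidableEq α] (A : Matrix α α ℝ) : ℝ :=
  ∑ σ : Equiv.Perm α, ∏ i, A i (σ i)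

/-- The `M × M` matrix all of whose entries are `1/M`. -/
noncomputable def Umat (M : ℕ) : Matrix (Fin M) (Fin M) ℝ := fun _ _ => 1 / (M : ℝ)

/-- The degree-`M` scaled Sinkhorn permanent `(perm(θ ⊗ U_{M,M}))^{1/M}`. -/
noncomputable def permScS {n : ℕ} (M : ℕ) (θ : Matrix (Fin n) (Fin n) ℝ) : ℝ :=
  (permG (θ ⊗ₖ Umat M)) ^ ((1 : ℝ) / M)

open Equiv Finset

theorem Equiv.Perm.exists_prodCongrLeft_eq {α β : Type*} (σ : Perm (α × β))
    (hσ : ∀ p, (σ p).2 = p.2) : ∃ τ : β → Perm α, prodCongrLeft τ = σ := by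
  have hσ_symm : ∀ p, (σ.symm p).2 = p.2 := fun p => by
    simpa using (hσ (σ.symm p)).symm
  have fiber : ∀ a b, ((σ (a, b)).1, b) = σ (a, b) := fun a b => Prod.ext rfl (hσ (a, b)).symm
  have fiber_symm : ∀ a b, ((σ.symm (a, b)).1, b) = σ.symm (a, b) := fun a b =>
    Prod.ext rfl (hσ_symm (a, b)).symm
  refine ⟨fun b => ⟨fun a => (σ (a, b)).1, fun a => (σ.symm (a, b)).1, fun a => ?_,
    fun a => ?_⟩, Equiv.ext fun ⟨a, b⟩ => fiber a b⟩
  · simp [fiber]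
  · simp [fiber_symm]

namespace Matrix

variable {m n o R : Type*} [Fintype m] [DecidableEq m] [Fintype n] [DecidableEq n]
  [Fintype o] [DecidableEq o] [CommSemiring R]

theorem permanent_reindex_self (e : m ≃ n) (A : Matrix m m R) :
    (reindex e e A).permanent = A.permanent := by
  refine (Fintype.sum_equiv e.permCongr _ _ fun τ => ?_).symm
  exact Fintype.prod_equiv e _ _ fun i => by simp

theorem permanent_blockDiagonal (M : o → Matrix m m R) :
    (blockDiagonal M).permanent = ∏ k, (M k).permanent := by
  simp only [permanent, Fintype.prod_sum]
  symm
  refine Fintype.sum_of_injective (fun τ => prodCongrLeft τ) ?_ _ _ ?_ fun τ => ?_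
  · intro τ τ' h
    funext k
    ext a
    simpa using congrArg (fun σ : Perm (m × o) => (σ (a, k)).1) h
  · intro σ hσ
    obtain ⟨p, hp⟩ : ∃ p, (σ p).2 ≠ p.2 := by
      by_contra! h
      exact hσ (Perm.exists_prodCongrLeft_eq σ h)
    exact prod_eq_zero (mem_univ p) (blockDiagonal_apply_ne _ _ _ hp)
  · simp [Fintype.prod_prod_type_right]

theorem permanent_diagonal_kronecker (a : n → R) (B : Matrix m m R) :
    (diagonal a ⊗ₖ B).permanent = ∏ i, a i ^ Fintype.card m * B.permanent := by
  rw [diagonal_kronecker, permanent_reindex_self, permanent_blockDiagonal]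
  simp only [permanent_smul]

theorem permanent_of_const (c : R) :
    (of fun _ _ : n => c).permanent = (Fintype.card n).factorial * c ^ Fintype.card n := by
  simp [permanent, Fintype.card_perm]

end Matrix

theorem permG_eq_permanent {α : Type*} [Fintype α] [DecidableEq α] (A : Matrix α α ℝ) :
    permG A = A.permanent := by
  rw [← Matrix.permanent_transpose]
  rfl

theorem permG_of_isDiag {α : Type*} [Fintype α] [DecidableEq α] {A : Matrix α α ℝ}
    (hA : A.IsDiag) : permG A = ∏ i, A i i := by
  conv_lhs => rw [permG_eq_permanent, ← hA.diagonal_diag]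
  exact Matrix.permanent_diagonal

theorem permG_kronecker_Umat_of_isDiag {n : ℕ} (M : ℕ) {θ : Matrix (Fin n) (Fin n) ℝ}
    (hθ : θ.IsDiag) :
    permG (θ ⊗ₖ Umat M) = (M.factorial : ℝ) ^ n * ((∏ i, θ i i) / (M : ℝ) ^ n) ^ M := by
  have hU : Umat M = Matrix.of fun _ _ => 1 / (M : ℝ) := rfl
  conv_lhs => rw [permG_eq_permanent, ← hθ.diagonal_diag]
  rw [Matrix.permanent_diagonal_kronecker, hU, Matrix.permanent_of_const]
  simp only [Fintype.card_fin, Finset.prod_mul_distrib, Finset.prod_const, Finset.card_univ,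
    Finset.prod_pow, div_pow, Matrix.diag]
  ring

theorem permScS_of_isDiag {n M : ℕ} (hM : M ≠ 0) {θ : Matrix (Fin n) (Fin n) ℝ}
    (hθ : θ.IsDiag) (hdiag : ∀ i, 0 ≤ θ i i) :
    permScS M θ = (M.factorial : ℝ) ^ ((n : ℝ) / M) * ((∏ i, θ i i) / (M : ℝ) ^ n) := by
  have hP : 0 ≤ (∏ i, θ i i) / (M : ℝ) ^ n := by
    have := Finset.prod_nonneg fun i (_ : i ∈ Finset.univ) => hdiag i
    positivity
  rw [permScS, permG_kronecker_Umat_of_isDiag M hθ, Real.mul_rpow (by positivity) (by positivity),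
    one_div, Real.pow_rpow_inv_natCast hP hM, ← Real.rpow_natCast_mul (by positivity),
    ← div_eq_mul_inv]

theorem diagonal_achieves_scaled_sinkhorn_upper_bound {n M : ℕ} (hM : 1 ≤ M)
    (θ : Matrix (Fin n) (Fin n) ℝ) (hdiag : ∀ i, 0 < θ i i)
    (hoff : ∀ i j, i ≠ j → θ i j = 0) :
    permG θ = ((M : ℝ) ^ n / (M.factorial : ℝ) ^ ((n : ℝ) / M)) * permScS M θ := by
  have hM0 : (M : ℝ) ≠ 0 := by positivity
  rw [permG_of_isDiag hoff, permScS_of_isDiag (by omega) hoff fun i => (hdiag i).le]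
  field_simp
end

section
/- Let σ_1, σ_2 be permutations of [n] and let γ = (1/2)(P_{σ_1} + P_{σ_2}). Then C_2(γ) = 2^{c(σ_1,σ_2)}, where C_2(γ) is the number of ordered pairs (σ'_1, σ'_2) of permutations with (1/2)(P_{σ'_1} + P_{σ'_2}) = γ, and c(σ_1,σ_2) is the number of cycles of length greater than one of the permutation σ_1 ∘ σ_2^{-1}. -/
open scoped BigOperators

/-!
Two permutation matrices sum to `Pmat σ₁ + Pmat σ₂` exactly when their rows carry the same
unordered pairs `{σ₁ i, σ₂ i}`. Such a pair `(τ₁, τ₂)` is determined by `τ₁`, which may be any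
permutation with `τ₁ i ∈ {σ₁ i, σ₂ i}`; then `g = τ₁ σ₂⁻¹` satisfies `g y ∈ {ρ y, y}` for
`ρ = σ₁ σ₂⁻¹`, i.e. the cycle factors of `g` are cycle factors of `ρ`. A permutation is
determined by its cycle factors and every set of cycle factors of `ρ` occurs, so there are
`2 ^ c` choices, `c` the number of nontrivial cycles of `ρ`.
-/

open Finset

namespace Equiv.Perm

section CycleFactors

variable {α : Type*} [Fintype α] [DecidableEq α]

theorem forall_apply_eq_or_apply_eq_self_iff {g ρ : Perm α} :
    (∀ x, g x = ρ x ∨ g x = x) ↔ g.cycleFactorsFinset ⊆ ρ.cycleFactorsFinset := by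
  constructor
  · intro h c hc
    have hc' := mem_cycleFactorsFinset_iff.mp hc
    refine mem_cycleFactorsFinset_iff.mpr ⟨hc'.1, fun a ha => ?_⟩
    have hga : g a ≠ a := mem_support.mp (mem_cycleFactorsFinset_support_le hc ha)
    rw [hc'.2 a ha]
    exact (h a).resolve_right hga
  · intro h x
    by_cases hx : x ∈ g.support
    · have hcycle := h (cycleOf_mem_cycleFactorsFinset_iff.mpr hx)
      have hx' : x ∈ (g.cycleOf x).support := mem_support_cycleOf_iff.mpr ⟨.refl _ _, hx⟩
      left
      rw [← cycleOf_apply_self, (mem_cycleFactorsFinset_iff.mp hcycle).2 x hx']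
    · exact Or.inr (notMem_support.mp hx)

theorem exists_cycleFactorsFinset_eq_of_subset {ρ : Perm α} {s : Finset (Perm α)}
    (hs : s ⊆ ρ.cycleFactorsFinset) : ∃ g : Perm α, g.cycleFactorsFinset = s :=
  ⟨_, cycleFactorsFinset_eq_finset.mpr
    ⟨fun _ hc => (mem_cycleFactorsFinset_iff.mp (hs hc)).1,
      (cycleFactorsFinset_pairwise_disjoint ρ).mono (coe_subset.mpr hs), rfl⟩⟩

theorem card_cycleFactorsFinset_subset (ρ : Perm α) :
    Nat.card {g : Perm α // g.cycleFactorsFinset ⊆ ρ.cycleFactorsFinset}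
      = 2 ^ ρ.cycleType.card := by
  let e : {g : Perm α // g.cycleFactorsFinset ⊆ ρ.cycleFactorsFinset} ≃
      ρ.cycleFactorsFinset.powerset :=
    .ofBijective (fun g => ⟨g.1.cycleFactorsFinset, mem_powerset.mpr g.2⟩)
      ⟨fun g h hgh => Subtype.ext (cycleFactorsFinset_injective (congrArg Subtype.val hgh)),
        fun s => by
          obtain ⟨g, hg⟩ := exists_cycleFactorsFinset_eq_of_subset (mem_powerset.mp s.2)
          exact ⟨⟨g, hg ▸ mem_powerset.mp s.2⟩, Subtype.ext hg⟩⟩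
  rw [Nat.card_congr e, Nat.card_eq_fintype_card, Fintype.card_coe, card_powerset,
    cycleType_def, Multiset.card_map, card_val]

theorem card_apply_eq_or_apply_eq_self (ρ : Perm α) :
    Nat.card {g : Perm α // ∀ x, g x = ρ x ∨ g x = x} = 2 ^ ρ.cycleType.card := by
  simp_rw [forall_apply_eq_or_apply_eq_self_iff, card_cycleFactorsFinset_subset]

theorem card_apply_eq_or_apply_eq (σ₁ σ₂ : Perm α) :
    Nat.card {τ : Perm α // ∀ x, τ x = σ₁ x ∨ τ x = σ₂ x} = 2 ^ (σ₁ * σ₂⁻¹).cycleType.card := by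
  rw [← card_apply_eq_or_apply_eq_self]
  refine Nat.card_congr (.subtypeEquiv (.mulRight σ₂⁻¹) fun τ => ?_)
  rw [← σ₂.symm.forall_congr_right]
  simp [mul_apply]

end CycleFactors

section Pairs

variable {α : Type*} [DecidableEq α]

/-- `σ₁ * τ⁻¹ * σ₂` takes at each point the one of the values of `σ₁`, `σ₂` that `τ` does not. -/
theorem sym2_mk_apply_mul_inv_mul {σ₁ σ₂ τ : Perm α} (h : ∀ x, τ x = σ₁ x ∨ τ x = σ₂ x)
    (x : α) : s(τ x, (σ₁ * τ⁻¹ * σ₂) x) = s(σ₁ x, σ₂ x) := by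
  set y := τ⁻¹ (σ₂ x) with hy
  have hτy : τ y = σ₂ x := by simp [hy]
  simp only [mul_apply, ← hy]
  by_cases hyx : y = x
  · rw [← hτy, hyx, Sym2.eq_swap]
  · have hτx : τ x = σ₁ x :=
      (h x).resolve_right fun h' => hyx (τ.injective (hτy.trans h'.symm))
    have hσy : σ₁ y = σ₂ x :=
      ((h y).resolve_right fun h' => hyx (σ₂.injective (h'.symm.trans hτy))).symm.trans hτy
    rw [hτx, hσy]

def pairsEquivFst (σ₁ σ₂ : Perm α) :
    {τ : Fin 2 → Perm α // ∀ x, s(τ 0 x, τ 1 x) = s(σ₁ x, σ₂ x)} ≃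
      {τ : Perm α // ∀ x, τ x = σ₁ x ∨ τ x = σ₂ x} where
  toFun τ := ⟨τ.1 0, fun x => Sym2.mem_iff.mp (τ.2 x ▸ Sym2.mem_mk_left _ _)⟩
  invFun τ := ⟨![τ.1, σ₁ * τ.1⁻¹ * σ₂], sym2_mk_apply_mul_inv_mul τ.2⟩
  left_inv τ := by
    ext i x
    fin_cases i
    · rfl
    · have h0 : ∀ x, τ.1 0 x = σ₁ x ∨ τ.1 0 x = σ₂ x :=
        fun x => Sym2.mem_iff.mp (τ.2 x ▸ Sym2.mem_mk_left _ _)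
      exact (Sym2.congr_right.mp ((τ.2 x).trans (sym2_mk_apply_mul_inv_mul h0 x).symm)).symm
  right_inv _ := rfl

end Pairs

end Equiv.Perm

theorem Pmat_apply {n : ℕ} (σ : Equiv.Perm (Fin n)) (i : Fin n) :
    Pmat σ i = Pi.single (σ i) 1 := by
  ext j
  simp [Pmat, Pi.single_apply, eq_comm]

theorem Pmat_add_Pmat_eq_iff {n : ℕ} {σ₁ σ₂ τ₁ τ₂ : Equiv.Perm (Fin n)} :
    Pmat τ₁ + Pmat τ₂ = Pmat σ₁ + Pmat σ₂ ↔ ∀ i, s(τ₁ i, τ₂ i) = s(σ₁ i, σ₂ i) := by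
  refine funext_iff.trans (forall_congr' fun i => ?_)
  change Pmat τ₁ i + Pmat τ₂ i = Pmat σ₁ i + Pmat σ₂ i ↔ _
  simp only [Pmat_apply]
  rw [Pi.single_add_single_eq_single_add_single one_ne_zero one_ne_zero, Sym2.eq_iff]
  norm_num

theorem CM_two_half_smul_add_Pmat {n : ℕ} (σ₁ σ₂ : Equiv.Perm (Fin n)) :
    CM 2 ((2 : ℝ)⁻¹ • (Pmat σ₁ + Pmat σ₂)) =
      Nat.card {τ : Fin 2 → Equiv.Perm (Fin n) // ∀ i, s(τ 0 i, τ 1 i) = s(σ₁ i, σ₂ i)} :=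
  Nat.card_congr <| .subtypeEquivRight fun τ => by
    rw [Fin.sum_univ_two, Nat.cast_ofNat, smul_right_inj (by norm_num), eq_comm,
      Pmat_add_Pmat_eq_iff]

theorem CM_two_eq_two_pow_cycles {n : ℕ} (σ₁ σ₂ : Equiv.Perm (Fin n)) :
    CM 2 ((2 : ℝ)⁻¹ • (Pmat σ₁ + Pmat σ₂))
      = 2 ^ (σ₁ * σ₂⁻¹).cycleType.card := by
  rw [CM_two_half_smul_add_Pmat, Nat.card_congr (Equiv.Perm.pairsEquivFst σ₁ σ₂),
    Equiv.Perm.card_apply_eq_or_apply_eq]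
end

section
/- Let θ be an n×n non-negative matrix with perm(θ) > 0. Then perm(θ)/perm_{B,2}(θ) = (Σ_{σ_1,σ_2 ∈ S_n} p_θ(σ_1)·p_θ(σ_2)·2^{−c(σ_1,σ_2)})^{−1/2}, where p_θ(σ) = Π_i θ(i,σ(i)) / perm(θ), c(σ_1,σ_2) is the number of cycles of length > 1 of σ_1 ∘ σ_2^{-1}, and perm_{B,2}(θ)^2 = Σ_{γ ∈ Γ_{2,n}} θ^{2γ}·C^B_2(γ). -/
open scoped BigOperators

/-- The probability mass function on permutations induced by `θ`. -/
noncomputable def pTheta {n : ℕ} (θ : Matrix (Fin n) (Fin n) ℝ)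
    (σ : Equiv.Perm (Fin n)) : ℝ :=
  (∏ i, θ i (σ i)) / perm θ

/-!
By König's theorem (Hall's theorem applied repeatedly), every `γ ∈ Γ_{2,n}` is the average
`(P_{σ₁} + P_{σ₂}) / 2` of two permutation matrices; for such `γ` one has `θ^{2γ} = θ^{σ₁} θ^{σ₂}`
and `C^B_2(γ) = 1`. The pairs `(τ₁, τ₂)` with the same average are determined by `τ₁ = ρ σ₂`, where
`ρ` agrees at every point with either the identity or `ζ = σ₁ σ₂⁻¹`; such `ρ` are exactly the
products of subsets of the cycles of `ζ`, so each average is hit by `2^{c(σ₁,σ₂)}` pairs. Summing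
over pairs and dividing by the fibre sizes gives
`perm_{B,2}(θ)² = ∑ θ^{σ₁} θ^{σ₂} 2^{-c(σ₁,σ₂)} = perm(θ)² ∑ p_θ(σ₁) p_θ(σ₂) 2^{-c(σ₁,σ₂)}`.
-/

open Equiv Finset

namespace Equiv.Perm
variable {α : Type*} [Fintype α] [DecidableEq α]

theorem cycleFactorsFinset_subset_iff_forall_eq_or_eq {ρ ζ : Perm α} :
    ρ.cycleFactorsFinset ⊆ ζ.cycleFactorsFinset ↔ ∀ x, ρ x = x ∨ ρ x = ζ x := by
  constructor
  · intro h x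
    refine or_iff_not_imp_left.mpr fun hx => ?_
    have hc := h (cycleOf_mem_cycleFactorsFinset_iff.mpr (mem_support.mpr hx))
    rw [← cycleOf_apply_self]
    exact (mem_cycleFactorsFinset_iff.mp hc).2 x
      (mem_support_cycleOf_iff.mpr ⟨.refl _ _, mem_support.mpr hx⟩)
  · intro h c hc
    obtain ⟨hcyc, hρ⟩ := mem_cycleFactorsFinset_iff.mp hc
    refine mem_cycleFactorsFinset_iff.mpr ⟨hcyc, fun a ha => ?_⟩
    rw [hρ a ha]
    refine (h a).resolve_left fun hfix => ?_
    exact mem_support.mp (mem_cycleFactorsFinset_support_le hc ha) hfix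

theorem card_filter_cycleFactorsFinset_subset (ζ : Perm α) :
    #{ρ : Perm α | ρ.cycleFactorsFinset ⊆ ζ.cycleFactorsFinset} = 2 ^ #ζ.cycleFactorsFinset := by
  rw [← card_powerset]
  refine card_bij (fun ρ _ => ρ.cycleFactorsFinset) (fun ρ hρ => by simpa using hρ)
    (fun _ _ _ _ h => cycleFactorsFinset_injective h) fun s hs => ?_
  have hsub := mem_powerset.mp hs
  have hdisj : (s : Set (Perm α)).Pairwise Disjoint :=
    (cycleFactorsFinset_pairwise_disjoint ζ).mono (coe_subset.mpr hsub)
  have hfs : (s.noncommProd id (hdisj.mono' fun _ _ => Disjoint.commute)).cycleFactorsFinset = s :=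
    cycleFactorsFinset_eq_finset.mpr
      ⟨fun c hc => (mem_cycleFactorsFinset_iff.mp (hsub hc)).1, hdisj, rfl⟩
  exact ⟨_, mem_filter.mpr ⟨mem_univ _, hfs.symm ▸ hsub⟩, hfs⟩

theorem card_filter_forall_eq_or_eq (ζ : Perm α) :
    #{ρ : Perm α | ∀ x, ρ x = x ∨ ρ x = ζ x} = 2 ^ ζ.cycleType.card := by
  simp_rw [← cycleFactorsFinset_subset_iff_forall_eq_or_eq, card_filter_cycleFactorsFinset_subset,
    cycleType_def, Multiset.card_map]
  rfl

end Equiv.Perm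

theorem ite_one_add_ite_one_eq_iff {α : Type*} [DecidableEq α] {a b c d : α} :
    (∀ j, (if a = j then 1 else 0 : ℝ) + (if b = j then 1 else 0) =
      (if c = j then 1 else 0) + (if d = j then 1 else 0)) ↔ (a = c ∧ b = d) ∨ (a = d ∧ b = c) := by
  constructor
  · intro h
    have eq_of_indicator_eq : ∀ {e : α}, (∀ j, (if b = j then 1 else 0 : ℝ) =
        if e = j then 1 else 0) → b = e := fun he => by simpa [eq_comm] using (he b).symm
    obtain rfl | rfl : a = c ∨ a = d := by
      by_contra! hne
      have := h a
      simp only [if_pos, if_neg hne.1.symm, if_neg hne.2.symm] at this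
      split_ifs at this <;> norm_num at this
    · exact .inl ⟨rfl, eq_of_indicator_eq fun j => add_left_cancel (h j)⟩
    · exact .inr ⟨rfl, eq_of_indicator_eq fun j => add_left_cancel ((h j).trans (add_comm _ _))⟩
  · rintro (⟨rfl, rfl⟩ | ⟨rfl, rfl⟩) j
    · rfl
    · exact add_comm _ _

theorem Matrix.exists_perm_forall_pos_of_sum_eq {ι R : Type*} [Fintype ι] [DecidableEq ι]
    [Field R] [LinearOrder R] [IsStrictOrderedRing R] {A : Matrix ι ι R} {s : R} (hs : 0 < s)
    (hA : ∀ i j, 0 ≤ A i j) (hrow : ∀ i, ∑ j, A i j = s) (hcol : ∀ j, ∑ i, A i j = s) :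
    ∃ σ : Perm ι, ∀ i, 0 < A i (σ i) := by
  set t : ι → Finset ι := fun i => {j | 0 < A i j}
  have hall : ∀ S : Finset ι, #S ≤ #(S.biUnion t) := by
    intro S
    have hrowS : ∀ i ∈ S, ∑ j ∈ S.biUnion t, A i j = s := fun i hi => by
      rw [← hrow i]
      refine sum_subset (subset_univ _) fun j _ hj => ?_
      by_contra hne
      exact hj (mem_biUnion.mpr ⟨i, hi, by simpa [t] using lt_of_le_of_ne (hA i j) (Ne.symm hne)⟩)
    have : #S * s ≤ #(S.biUnion t) * s :=
      calc #S * s = ∑ i ∈ S, ∑ j ∈ S.biUnion t, A i j := by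
            rw [sum_congr rfl hrowS, sum_const, nsmul_eq_mul]
        _ = ∑ j ∈ S.biUnion t, ∑ i ∈ S, A i j := sum_comm
        _ ≤ ∑ j ∈ S.biUnion t, ∑ i, A i j :=
            sum_le_sum fun j _ => sum_le_sum_of_subset_of_nonneg (subset_univ _)
              fun i _ _ => hA i j
        _ = #(S.biUnion t) * s := by rw [sum_congr rfl fun j _ => hcol j, sum_const, nsmul_eq_mul]
    exact_mod_cast le_of_mul_le_mul_right this hs
  obtain ⟨f, hf, hft⟩ := (all_card_le_biUnion_card_iff_exists_injective t).mp hall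
  exact ⟨.ofBijective f (Finite.injective_iff_bijective.mp hf), fun i => by simpa [t] using hft i⟩

theorem sum_Pmat_row {n : ℕ} (σ : Perm (Fin n)) (i : Fin n) : ∑ j, Pmat σ i j = 1 := by
  simp [Pmat]

theorem sum_Pmat_col {n : ℕ} (σ : Perm (Fin n)) (j : Fin n) : ∑ i, Pmat σ i j = 1 := by
  simp [Pmat, ← eq_symm_apply]

theorem exists_eq_sum_Pmat_of_sum_eq {n : ℕ} (m : ℕ) {A : Matrix (Fin n) (Fin n) ℝ}
    (hA : ∀ i j, ∃ k : ℕ, A i j = k) (hrow : ∀ i, ∑ j, A i j = m) (hcol : ∀ j, ∑ i, A i j = m) :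
    ∃ σs : Fin m → Perm (Fin n), A = ∑ k, Pmat (σs k) := by
  have hA₀ : ∀ i j, 0 ≤ A i j := fun i j => by obtain ⟨k, hk⟩ := hA i j; simp [hk]
  induction m generalizing A with
  | zero =>
    refine ⟨Fin.elim0, funext fun i => funext fun j => ?_⟩
    simpa using (sum_eq_zero_iff_of_nonneg fun j _ => hA₀ i j).mp (by simpa using hrow i) j
      (mem_univ _)
  | succ m ih =>
    obtain ⟨σ, hσ⟩ := Matrix.exists_perm_forall_pos_of_sum_eq (A := A) (s := m + 1)
      (by positivity) hA₀ (by simpa using hrow) (by simpa using hcol)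
    have hA' : ∀ i j, ∃ k : ℕ, (A - Pmat σ) i j = k := fun i j => by
      obtain ⟨k, hk⟩ := hA i j
      by_cases h : σ i = j
      · subst h
        have hk1 : 1 ≤ k := by exact_mod_cast (show (0:ℝ) < k from hk ▸ hσ i)
        exact ⟨k - 1, by simp [Pmat, hk, Nat.cast_sub hk1]⟩
      · exact ⟨k, by simp [Pmat, hk, h]⟩
    obtain ⟨σs, hσs⟩ := ih hA'
      (fun i => by simp [Matrix.sub_apply, sum_sub_distrib, hrow, sum_Pmat_row])
      (fun j => by simp [Matrix.sub_apply, sum_sub_distrib, hcol, sum_Pmat_col])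
      (fun i j => by obtain ⟨k, hk⟩ := hA' i j; simp [hk])
    exact ⟨Fin.cons σ σs, by
      simp only [Fin.sum_univ_succ, Fin.cons_zero, Fin.cons_succ, ← hσs, add_sub_cancel]⟩

theorem memGamma_iff_exists_eq_smul_sum_Pmat {n M : ℕ} (hM : 0 < M)
    {γ : Matrix (Fin n) (Fin n) ℝ} :
    MemGamma M γ ↔ ∃ σs : Fin M → Perm (Fin n), γ = (M : ℝ)⁻¹ • ∑ k, Pmat (σs k) := by
  have hM' : (M : ℝ) ≠ 0 := by positivity
  constructor
  · rintro ⟨⟨-, hrow, hcol⟩, hk⟩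
    obtain ⟨σs, hσs⟩ := exists_eq_sum_Pmat_of_sum_eq M (A := (M : ℝ) • γ)
      (fun i j => by obtain ⟨k, hk⟩ := hk i j; exact ⟨k, by simp [hk, mul_div_cancel₀ _ hM']⟩)
      (fun i => by simp [← mul_sum, hrow]) (fun j => by simp [← mul_sum, hcol])
    exact ⟨σs, by rw [← hσs, inv_smul_smul₀ hM']⟩
  · rintro ⟨σs, rfl⟩
    refine ⟨⟨fun i j => ?_, fun i => ?_, fun j => ?_⟩, fun i j => ⟨#{k | σs k i = j}, ?_⟩⟩
    · simp only [Matrix.smul_apply, Matrix.sum_apply, smul_eq_mul]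
      exact mul_nonneg (by positivity) (sum_nonneg fun k _ => by unfold Pmat; positivity)
    · simp [Matrix.sum_apply, ← mul_sum, sum_comm (γ := Fin n), sum_Pmat_row, hM']
    · simp only [Matrix.smul_apply, Matrix.sum_apply, smul_eq_mul, ← mul_sum]
      rw [sum_comm]
      simp [sum_Pmat_col, hM']
    · simp [Matrix.sum_apply, Pmat, inv_mul_eq_div]

noncomputable def avgPmat {n : ℕ} (σ₁ σ₂ : Perm (Fin n)) : Matrix (Fin n) (Fin n) ℝ :=
  (2 : ℝ)⁻¹ • (Pmat σ₁ + Pmat σ₂)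

theorem setOf_memGamma_two {n : ℕ} :
    {γ : Matrix (Fin n) (Fin n) ℝ | MemGamma 2 γ} =
      Set.range fun p : Perm (Fin n) × Perm (Fin n) => avgPmat p.1 p.2 := by
  ext γ
  simp only [Set.mem_ofPred_eq, memGamma_iff_exists_eq_smul_sum_Pmat two_pos, Set.mem_range,
    Fin.sum_univ_two, avgPmat, Nat.cast_ofNat, Prod.exists]
  exact ⟨fun ⟨σs, h⟩ => ⟨σs 0, σs 1, h.symm⟩, fun ⟨σ₁, σ₂, h⟩ => ⟨![σ₁, σ₂], by simp [h]⟩⟩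

theorem floor_two_mul_avgPmat {n : ℕ} (σ₁ σ₂ : Perm (Fin n)) (i j : Fin n) :
    ⌊(2 : ℝ) * avgPmat σ₁ σ₂ i j⌋₊ = (if σ₁ i = j then 1 else 0) + (if σ₂ i = j then 1 else 0) := by
  simp only [avgPmat, Pmat, Matrix.smul_apply, Matrix.add_apply, smul_eq_mul]
  split_ifs <;> norm_num

theorem matPow_two_avgPmat {n : ℕ} (θ : Matrix (Fin n) (Fin n) ℝ) (σ₁ σ₂ : Perm (Fin n)) :
    matPow 2 θ (avgPmat σ₁ σ₂) = (∏ i, θ i (σ₁ i)) * ∏ i, θ i (σ₂ i) := by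
  simp only [matPow, Nat.cast_ofNat, floor_two_mul_avgPmat, pow_add, prod_mul_distrib, pow_ite,
    pow_one, pow_zero, prod_ite_eq, mem_univ, if_true]

theorem CB_two_avgPmat {n : ℕ} (σ₁ σ₂ : Perm (Fin n)) : CB 2 (avgPmat σ₁ σ₂) = 1 := by
  have hentry : ∀ e ≤ 2, ((2 - e).factorial : ℝ) / (e.factorial : ℝ) = 2 / 2 ^ e := by
    intro e he
    interval_cases e <;> norm_num [Nat.factorial]
  have hrow : ∀ i, ∑ j, ⌊(2 : ℝ) * avgPmat σ₁ σ₂ i j⌋₊ = 2 := fun i => by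
    simp [floor_two_mul_avgPmat, sum_add_distrib]
  have hle : ∀ i j, ⌊(2 : ℝ) * avgPmat σ₁ σ₂ i j⌋₊ ≤ 2 := fun i j =>
    hrow i ▸ single_le_sum (f := fun j => ⌊(2 : ℝ) * avgPmat σ₁ σ₂ i j⌋₊)
      (fun _ _ => Nat.zero_le _) (mem_univ j)
  simp only [CB, Nat.cast_ofNat, Nat.factorial_two]
  simp only [hentry _ (hle _ _), prod_div_distrib, prod_const, card_univ, Fintype.card_fin,
    prod_pow_eq_pow_sum, hrow]
  rw [zpow_sub₀ two_ne_zero, ← pow_mul, ← pow_mul]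
  norm_cast
  rw [← sq, mul_comm 2 n]
  field_simp

theorem avgPmat_eq_avgPmat_iff {n : ℕ} {τ₁ τ₂ σ₁ σ₂ : Perm (Fin n)} :
    avgPmat τ₁ τ₂ = avgPmat σ₁ σ₂ ↔
      ∀ i, (τ₁ i = σ₁ i ∧ τ₂ i = σ₂ i) ∨ (τ₁ i = σ₂ i ∧ τ₂ i = σ₁ i) := by
  rw [avgPmat, avgPmat, (smul_right_injective _ (by norm_num : (2 : ℝ)⁻¹ ≠ 0)).eq_iff]
  simp only [← Matrix.ext_iff, Matrix.add_apply, Pmat, ite_one_add_ite_one_eq_iff]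

-- Where `τ` follows `σ₁`, its partner `σ₂ * τ⁻¹ * σ₁` follows `σ₂`, and vice versa.
theorem avgPmat_mul_inv_mul_eq {n : ℕ} {τ σ₁ σ₂ : Perm (Fin n)}
    (hτ : ∀ i, τ i = σ₁ i ∨ τ i = σ₂ i) : avgPmat τ (σ₂ * τ⁻¹ * σ₁) = avgPmat σ₁ σ₂ := by
  refine avgPmat_eq_avgPmat_iff.mpr fun i => ?_
  obtain ⟨k, hk⟩ : ∃ k, τ k = σ₁ i := ⟨τ⁻¹ (σ₁ i), by simp⟩
  have hτk : τ⁻¹ (σ₁ i) = k := by rw [← hk]; simp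
  simp only [Perm.mul_apply, hτk]
  rcases hτ k with h | h
  · obtain rfl : k = i := σ₁.injective (h.symm.trans hk)
    exact .inl ⟨hk, rfl⟩
  · rcases hτ i with h' | h'
    · obtain rfl : k = i := τ.injective (hk.trans h'.symm)
      exact .inl ⟨h', rfl⟩
    · exact .inr ⟨h', h.symm.trans hk⟩

theorem card_filter_avgPmat_eq {n : ℕ} (σ₁ σ₂ : Perm (Fin n)) :
    #{p : Perm (Fin n) × Perm (Fin n) | avgPmat p.1 p.2 = avgPmat σ₁ σ₂} =
      2 ^ (σ₁ * σ₂⁻¹).cycleType.card := by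
  rw [← Perm.card_filter_forall_eq_or_eq]
  refine card_bij (fun p _ => p.1 * σ₂⁻¹) (fun p hp => ?_) (fun p hp q hq hpq => ?_) fun ρ hρ => ?_
  · simp only [mem_filter, mem_univ, true_and, avgPmat_eq_avgPmat_iff] at hp ⊢
    intro x
    obtain ⟨i, rfl⟩ := σ₂.surjective x
    rcases hp i with ⟨h, -⟩ | ⟨h, -⟩ <;> simp [h]
  · simp only [mem_filter, mem_univ, true_and, avgPmat_eq_avgPmat_iff] at hp hq
    have h₁ : p.1 = q.1 := mul_right_cancel hpq
    refine Prod.ext h₁ (Perm.ext fun i => ?_)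
    have hq' := hq i
    rw [← h₁] at hq'
    rcases hp i with h | h <;> rcases hq' with h' | h' <;> grind
  · simp only [mem_filter, mem_univ, true_and] at hρ
    refine ⟨(ρ * σ₂, σ₂ * (ρ * σ₂)⁻¹ * σ₁), ?_, by simp⟩
    simp only [mem_filter, mem_univ, true_and]
    refine avgPmat_mul_inv_mul_eq fun i => ?_
    rcases hρ (σ₂ i) with h | h <;> simp [h]

theorem finsum_mem_range_eq_sum_div_card_fiber {α β K : Type*} [Fintype α] [DecidableEq β]
    [Semifield K] [CharZero K] (f : α → β) (F : β → K) :
    ∑ᶠ b ∈ Set.range f, F b = ∑ a, F (f a) / #{a' | f a' = f a} := by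
  rw [← Set.image_univ, ← coe_univ, ← coe_image, finsum_mem_coe_finset,
    ← sum_fiberwise_of_maps_to (g := f) fun a _ => mem_image_of_mem f (mem_univ a)]
  refine sum_congr rfl fun b hb => ?_
  obtain ⟨a, -, rfl⟩ := mem_image.mp hb
  have hcard : (#{a' | f a' = f a} : K) ≠ 0 :=
    Nat.cast_ne_zero.mpr (card_ne_zero_of_mem (a := a) (by simp))
  have hfiber : ∀ a' ∈ ({a' | f a' = f a} : Finset α),
      F (f a') / #{a'' | f a'' = f a'} = F (f a) / #{a'' | f a'' = f a} := fun a' ha' => by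
    rw [(mem_filter.mp ha').2]
  rw [sum_congr rfl hfiber, sum_const, nsmul_eq_mul, mul_div_cancel₀ _ hcard]

theorem finsum_memGamma_two {n : ℕ} (θ : Matrix (Fin n) (Fin n) ℝ) :
    ∑ᶠ γ ∈ {γ : Matrix (Fin n) (Fin n) ℝ | MemGamma 2 γ}, matPow 2 θ γ * CB 2 γ =
      ∑ σ₁ : Perm (Fin n), ∑ σ₂ : Perm (Fin n),
        (∏ i, θ i (σ₁ i)) * (∏ i, θ i (σ₂ i)) * ((2 : ℝ) ^ (σ₁ * σ₂⁻¹).cycleType.card)⁻¹ := by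
  rw [setOf_memGamma_two, finsum_mem_range_eq_sum_div_card_fiber, Fintype.sum_prod_type]
  simp only [matPow_two_avgPmat, CB_two_avgPmat, card_filter_avgPmat_eq, mul_one, div_eq_mul_inv,
    Nat.cast_pow, Nat.cast_ofNat]

theorem perm_div_degree_two_bethe_general {n : ℕ}
    (θ : Matrix (Fin n) (Fin n) ℝ) (hθ : ∀ i j, 0 ≤ θ i j) :
    perm θ /
        (∑ᶠ γ ∈ {γ : Matrix (Fin n) (Fin n) ℝ | MemGamma 2 γ},
            matPow 2 θ γ * CB 2 γ) ^ ((1 : ℝ) / 2)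
      = (∑ σ₁ : Equiv.Perm (Fin n), ∑ σ₂ : Equiv.Perm (Fin n),
            pTheta θ σ₁ * pTheta θ σ₂ *
              ((2 : ℝ) ^ ((σ₁ * σ₂⁻¹).cycleType.card))⁻¹) ^ (-(1 : ℝ) / 2) := by
  have hprod : ∀ σ : Perm (Fin n), 0 ≤ ∏ i, θ i (σ i) := fun σ => prod_nonneg fun i _ => hθ i _
  have hperm : 0 ≤ perm θ := sum_nonneg fun σ _ => hprod σ
  set S := ∑ σ₁ : Perm (Fin n), ∑ σ₂ : Perm (Fin n),
    (∏ i, θ i (σ₁ i)) * (∏ i, θ i (σ₂ i)) * ((2 : ℝ) ^ (σ₁ * σ₂⁻¹).cycleType.card)⁻¹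
  have hS : 0 ≤ S := sum_nonneg fun σ₁ _ => sum_nonneg fun σ₂ _ =>
    mul_nonneg (mul_nonneg (hprod σ₁) (hprod σ₂)) (by positivity)
  have hpTheta : ∑ σ₁ : Perm (Fin n), ∑ σ₂ : Perm (Fin n), pTheta θ σ₁ * pTheta θ σ₂ *
      ((2 : ℝ) ^ (σ₁ * σ₂⁻¹).cycleType.card)⁻¹ = S / perm θ ^ 2 := by
    simp only [S, pTheta, sum_div]
    exact sum_congr rfl fun _ _ => sum_congr rfl fun _ _ => by ring
  rw [finsum_memGamma_two, hpTheta, neg_div, Real.rpow_neg (by positivity),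
    Real.div_rpow hS (by positivity), ← Real.sqrt_eq_rpow, ← Real.sqrt_eq_rpow, Real.sqrt_sq hperm,
    inv_div]

theorem perm_div_degree_two_bethe {n : ℕ}
    (θ : Matrix (Fin n) (Fin n) ℝ) (hθ : ∀ i j, 0 ≤ θ i j) (hperm : 0 < perm θ) :
    perm θ /
        (∑ᶠ γ ∈ {γ : Matrix (Fin n) (Fin n) ℝ | MemGamma 2 γ},
            matPow 2 θ γ * CB 2 γ) ^ ((1 : ℝ) / 2)
      = (∑ σ₁ : Equiv.Perm (Fin n), ∑ σ₂ : Equiv.Perm (Fin n),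
            pTheta θ σ₁ * pTheta θ σ₂ *
              ((2 : ℝ) ^ ((σ₁ * σ₂⁻¹).cycleType.card))⁻¹) ^ (-(1 : ℝ) / 2) :=
  perm_div_degree_two_bethe_general θ hθ
end
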